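/- arXiv:2401.09656 — 2 statements merged into one kernel-verified Lean document; each statement's English description precedes it below -/
import Mathlib

section
/- Drift of a local gradient-descent trajectory from the centralized trajectory: if w^(0) = v^(0), w^(τ) = w^(τ−1) − η∇f(w^(τ−1)) and v^(τ) = v^(τ−1) − η∇F(v^(τ−1)) for τ ≥ 1, then for every integer τ₀ ≥ 0, ‖w^(τ₀) − v^(τ₀)‖ ≤ (δ/β)·[(1 + ηβ)^{τ₀} − 1]. -/
/-! The error `eₜ = ‖wₜ - vₜ‖` obeys `eₜ₊₁ ≤ (1 + ηβ) eₜ + ηδ`: the two steps differ by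
`η (∇f(wₜ) - ∇f(vₜ))`, controlled by smoothness, plus `η (∇f(vₜ) - ∇F(vₜ))`, controlled by `δ`.
Unrolling this affine recursion from `e₀ = 0` gives the geometric sum
`ηδ ((1 + ηβ)ᵗ - 1) / (ηβ)`. -/

theorem le_mul_one_add_pow_sub_one {a : ℕ → ℝ} {K M : ℝ} (hK : 0 ≤ K) (h0 : a 0 ≤ 0)
    (hstep : ∀ n, a (n + 1) ≤ (1 + K) * a n + K * M) :
    ∀ n, a n ≤ M * ((1 + K) ^ n - 1) := by
  intro n
  induction n with
  | zero => simpa using h0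
  | succ n ih =>
    calc a (n + 1) ≤ (1 + K) * a n + K * M := hstep n
      _ ≤ (1 + K) * (M * ((1 + K) ^ n - 1)) + K * M := by gcongr
      _ = M * ((1 + K) ^ (n + 1) - 1) := by ring

theorem norm_sub_smul_sub_sub_smul_le {E : Type*} [SeminormedAddCommGroup E] [NormedSpace ℝ E]
    {g G : E → E} {β δ η : ℝ} (hη : 0 ≤ η) (hg : ∀ x y, ‖g x - g y‖ ≤ β * ‖x - y‖)
    (hgG : ∀ x, ‖g x - G x‖ ≤ δ) (x y : E) :
    ‖(x - η • g x) - (y - η • G y)‖ ≤ (1 + η * β) * ‖x - y‖ + η * δ := by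
  have hsplit : (x - η • g x) - (y - η • G y)
      = (x - y) - η • (g x - g y) - η • (g y - G y) := by module
  calc ‖(x - η • g x) - (y - η • G y)‖
      ≤ ‖x - y‖ + η * ‖g x - g y‖ + η * ‖g y - G y‖ := by
        rw [hsplit]
        refine (norm_sub_le _ _).trans (add_le_add ((norm_sub_le _ _).trans ?_) ?_)
        · rw [norm_smul, Real.norm_of_nonneg hη]
        · rw [norm_smul, Real.norm_of_nonneg hη]
    _ ≤ ‖x - y‖ + η * (β * ‖x - y‖) + η * δ := by gcongr <;> apply_assumption
    _ = (1 + η * β) * ‖x - y‖ + η * δ := by ring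

theorem stmt14_general {d : ℕ} (f F : EuclideanSpace ℝ (Fin d) → ℝ) (β δ η : ℝ)
    (hβ : 0 < β) (hη : 0 < η)
    (hsmooth : ∀ x y, ‖gradient f x - gradient f y‖ ≤ β * ‖x - y‖)
    (hgraddiff : ∀ x, ‖gradient f x - gradient F x‖ ≤ δ)
    (w v : ℕ → EuclideanSpace ℝ (Fin d))
    (h0 : w 0 = v 0)
    (hw : ∀ τ : ℕ, w (τ + 1) = w τ - η • gradient f (w τ))
    (hv : ∀ τ : ℕ, v (τ + 1) = v τ - η • gradient F (v τ)) :
    ∀ τ₀ : ℕ, ‖w τ₀ - v τ₀‖ ≤ δ / β * ((1 + η * β) ^ τ₀ - 1) := by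
  refine le_mul_one_add_pow_sub_one (a := fun τ => ‖w τ - v τ‖) (by positivity)
    (by simp [h0]) fun τ => ?_
  calc ‖w (τ + 1) - v (τ + 1)‖ ≤ (1 + η * β) * ‖w τ - v τ‖ + η * δ := by
        rw [hw, hv]
        exact norm_sub_smul_sub_sub_smul_le hη.le hsmooth hgraddiff _ _
    _ = (1 + η * β) * ‖w τ - v τ‖ + η * β * (δ / β) := by field_simp

/-- Drift of a local gradient-descent trajectory from the centralized trajectory: if
`w⁰ = v⁰`, `wᵗ = wᵗ⁻¹ − η∇f(wᵗ⁻¹)` and `vᵗ = vᵗ⁻¹ − η∇F(vᵗ⁻¹)`, then for every `τ₀ ≥ 0`,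
`‖w^{τ₀} − v^{τ₀}‖ ≤ (δ/β)·[(1 + ηβ)^{τ₀} − 1]`. -/
theorem stmt14 {d : ℕ} (f F : EuclideanSpace ℝ (Fin d) → ℝ) (β δ η : ℝ)
    (hβ : 0 < β) (hδ : 0 ≤ δ) (hη : 0 < η)
    (hf : Differentiable ℝ f) (hF : Differentiable ℝ F)
    (hsmooth : ∀ x y, ‖gradient f x - gradient f y‖ ≤ β * ‖x - y‖)
    (hgraddiff : ∀ x, ‖gradient f x - gradient F x‖ ≤ δ)
    (w v : ℕ → EuclideanSpace ℝ (Fin d))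
    (h0 : w 0 = v 0)
    (hw : ∀ τ : ℕ, w (τ + 1) = w τ - η • gradient f (w τ))
    (hv : ∀ τ : ℕ, v (τ + 1) = v τ - η • gradient F (v τ)) :
    ∀ τ₀ : ℕ, ‖w τ₀ - v τ₀‖ ≤ δ / β * ((1 + η * β) ^ τ₀ - 1) :=
  stmt14_general f F β δ η hβ hη hsmooth hgraddiff w v h0 hw hv
end

section
/- Drift of a virtual edge average under pure local updates (no intra-cluster aggregation): if each w_m^(τ) = w_m^(τ−1) − η∇f_m(w_m^(τ−1)) and v^(τ) = v^(τ−1) − η∇F(v^(τ−1)) with a common start w_m^(0) = v^(0) for all m ∈ S, then for every integer τ₀ ≥ 0, ‖Σ_{m∈S} α_m w_m^(τ₀) − v^(τ₀)‖ ≤ (δ_S/β)·[(1 + ηβ)^{τ₀} − 1] − η·τ₀·(δ_S − Δ_S). -/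
open Finset

/-!
Compare every local iterate `w_m` with the centralized iterate `v`. One gradient step with a
`β`-smooth `f_m` and gradient bias `δ_m` gives `e_m(τ+1) ≤ (1 + ηβ) e_m(τ) + η δ_m` for
`e_m = ‖w_m − v‖`, so the averaged error `A = Σ α_m e_m` is at most `(δ_S/β)((1 + ηβ)^τ − 1)`.
For the drift of the average itself only the edge-level bias `Δ_S` enters, while the smoothness
term costs `ηβ A(τ)`; summing these increments over `τ < τ₀` gives the bound.
-/

section Gradient

variable {E : Type*} [NormedAddCommGroup E] [InnerProductSpace ℝ E] [CompleteSpace E]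

theorem hasGradientAt_finset_sum_mul {ι : Type*} (S : Finset ι) (f : ι → E → ℝ) (α : ι → ℝ)
    {x : E} (hf : ∀ m ∈ S, DifferentiableAt ℝ (f m) x) :
    HasGradientAt (fun x => ∑ m ∈ S, α m * f m x) (∑ m ∈ S, α m • gradient (f m) x) x := by
  rw [hasGradientAt_iff_hasFDerivAt, map_sum]
  refine (HasFDerivAt.fun_sum fun m hm => ((hf m hm).hasFDerivAt).const_mul (α m)).congr_fderiv
    (sum_congr rfl fun m _ => ?_)
  simp

end Gradient

section DescentStep

variable {E : Type*} [NormedAddCommGroup E] [NormedSpace ℝ E]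

theorem norm_descent_step_sub_descent_step_le {g h : E → E} {x y : E} {η β δ : ℝ} (hη : 0 ≤ η)
    (hg : ‖g x - g y‖ ≤ β * ‖x - y‖) (hgh : ‖g y - h y‖ ≤ δ) :
    ‖(x - η • g x) - (y - η • h y)‖ ≤ (1 + η * β) * ‖x - y‖ + η * δ := by
  calc ‖(x - η • g x) - (y - η • h y)‖
      = ‖(x - y) - η • (g x - g y) - η • (g y - h y)‖ := by
        congr 1; simp only [smul_sub]; abel
    _ ≤ ‖x - y‖ + η * ‖g x - g y‖ + η * ‖g y - h y‖ := by
        grw [norm_sub_le, norm_sub_le, norm_smul, norm_smul, Real.norm_of_nonneg hη]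
    _ ≤ (1 + η * β) * ‖x - y‖ + η * δ := by
        grw [hg, hgh]; linarith

theorem norm_sum_descent_step_sub_descent_step_le {ι : Type*} (S : Finset ι) {α : ι → ℝ}
    (hα : ∀ m ∈ S, 0 ≤ α m) {g : ι → E → E} {h : E → E} {x : ι → E} {y : E} {η β Δ : ℝ}
    (hη : 0 ≤ η) (hg : ∀ m ∈ S, ‖g m (x m) - g m y‖ ≤ β * ‖x m - y‖)
    (hgh : ‖∑ m ∈ S, α m • g m y - h y‖ ≤ Δ) :
    ‖∑ m ∈ S, α m • (x m - η • g m (x m)) - (y - η • h y)‖ ≤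
      ‖∑ m ∈ S, α m • x m - y‖ + η * (β * ∑ m ∈ S, α m * ‖x m - y‖) + η * Δ := by
  have hsmooth : ‖∑ m ∈ S, α m • (g m (x m) - g m y)‖ ≤ β * ∑ m ∈ S, α m * ‖x m - y‖ := by
    rw [mul_sum]
    refine (norm_sum_le _ _).trans (sum_le_sum fun m hm => ?_)
    rw [norm_smul, Real.norm_of_nonneg (hα m hm), mul_left_comm]
    exact mul_le_mul_of_nonneg_left (hg m hm) (hα m hm)
  calc ‖∑ m ∈ S, α m • (x m - η • g m (x m)) - (y - η • h y)‖
      = ‖(∑ m ∈ S, α m • x m - y) - η • ∑ m ∈ S, α m • (g m (x m) - g m y)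
          - η • (∑ m ∈ S, α m • g m y - h y)‖ := by
        congr 1
        simp only [smul_sub, sum_sub_distrib, smul_sum, smul_comm η]
        abel
    _ ≤ ‖∑ m ∈ S, α m • x m - y‖ + η * ‖∑ m ∈ S, α m • (g m (x m) - g m y)‖
          + η * ‖∑ m ∈ S, α m • g m y - h y‖ := by
        grw [norm_sub_le, norm_sub_le, norm_smul, norm_smul, Real.norm_of_nonneg hη]
    _ ≤ _ := by grw [hsmooth, hgh]

end DescentStep

theorem le_mul_pow_sub_one_of_le_mul_add {a : ℕ → ℝ} {q K : ℝ} (hq : 0 ≤ q) (h0 : a 0 ≤ 0)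
    (hstep : ∀ n, a (n + 1) ≤ q * a n + (q - 1) * K) (n : ℕ) : a n ≤ K * (q ^ n - 1) := by
  induction n with
  | zero => simpa using h0
  | succ n ih =>
    calc a (n + 1) ≤ q * (K * (q ^ n - 1)) + (q - 1) * K := by grw [hstep n, ih]
      _ = K * (q ^ (n + 1) - 1) := by ring

theorem stmt18_general {d : ℕ} {ι : Type*} (S : Finset ι)
    (f : ι → EuclideanSpace ℝ (Fin d) → ℝ) (β η : ℝ) (hβ : 0 < β) (hη : 0 < η)
    (hf : ∀ m ∈ S, Differentiable ℝ (f m))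
    (hsmooth : ∀ m ∈ S, ∀ x y, ‖gradient (f m) x - gradient (f m) y‖ ≤ β * ‖x - y‖)
    (α : ι → ℝ) (hα : ∀ m ∈ S, 0 < α m) (hαsum : ∑ m ∈ S, α m = 1)
    (F : EuclideanSpace ℝ (Fin d) → ℝ)
    (δm : ι → ℝ) (hδm : ∀ m ∈ S, ∀ x, ‖gradient (f m) x - gradient F x‖ ≤ δm m)
    (δS : ℝ) (hδS : δS = ∑ m ∈ S, α m * δm m)
    (G : EuclideanSpace ℝ (Fin d) → ℝ) (hG : G = fun x => ∑ m ∈ S, α m * f m x)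
    (ΔS : ℝ) (hΔS : ∀ x, ‖gradient G x - gradient F x‖ ≤ ΔS)
    (w : ℕ → ι → EuclideanSpace ℝ (Fin d)) (v : ℕ → EuclideanSpace ℝ (Fin d))
    (h0 : ∀ m ∈ S, w 0 m = v 0)
    (hw : ∀ τ : ℕ, ∀ m ∈ S, w (τ + 1) m = w τ m - η • gradient (f m) (w τ m))
    (hv : ∀ τ : ℕ, v (τ + 1) = v τ - η • gradient F (v τ)) :
    ∀ τ₀ : ℕ, ‖(∑ m ∈ S, α m • w τ₀ m) - v τ₀‖ ≤
      δS / β * ((1 + η * β) ^ τ₀ - 1) - η * (τ₀ : ℝ) * (δS - ΔS) := by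
  have hGgrad : ∀ x, gradient G x = ∑ m ∈ S, α m • gradient (f m) x := fun x =>
    hG ▸ (hasGradientAt_finset_sum_mul S f α fun m hm => (hf m hm).differentiableAt).gradient
  have hA : ∀ τ, ∑ m ∈ S, α m * ‖w τ m - v τ‖ ≤ δS / β * ((1 + η * β) ^ τ - 1) := by
    refine le_mul_pow_sub_one_of_le_mul_add (a := fun τ => ∑ m ∈ S, α m * ‖w τ m - v τ‖)
      (by positivity) ?_ fun τ => ?_
    · exact (sum_eq_zero fun m hm => by rw [h0 m hm, sub_self, norm_zero, mul_zero]).le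
    · have hbias : (1 + η * β - 1) * (δS / β) = η * δS := by field_simp; ring
      rw [hbias, hδS, mul_sum, mul_sum, ← sum_add_distrib]
      refine sum_le_sum fun m hm => ?_
      have hlocal := norm_descent_step_sub_descent_step_le hη.le (hsmooth m hm (w τ m) (v τ))
        (hδm m hm (v τ))
      rw [hw τ m hm, hv τ]
      exact (mul_le_mul_of_nonneg_left hlocal (hα m hm).le).trans_eq (by ring)
  intro τ₀
  induction τ₀ with
  | zero =>
    rw [sum_congr rfl fun m hm => by rw [h0 m hm], ← sum_smul, hαsum]
    simp
  | succ τ ih =>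
    have hdrift := norm_sum_descent_step_sub_descent_step_le S (fun m hm => (hα m hm).le) hη.le
      (fun m hm => hsmooth m hm (w τ m) (v τ)) (hGgrad (v τ) ▸ hΔS (v τ))
    rw [sum_congr rfl fun m hm => by rw [hw τ m hm], hv τ]
    grw [hdrift, ih, hA τ]
    apply le_of_eq
    push_cast
    field_simp
    ring

/-- Drift of a virtual edge average under pure local updates (no intra-cluster aggregation):
if each `w_m^(τ) = w_m^(τ−1) − η∇f_m(w_m^(τ−1))` and `v^(τ) = v^(τ−1) − η∇F(v^(τ−1))` with a
common start `w_m^(0) = v^(0)`, then for every `τ₀ ≥ 0`,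
`‖Σ_{m∈S} α_m w_m^(τ₀) − v^(τ₀)‖ ≤ (δ_S/β)·[(1 + ηβ)^{τ₀} − 1] − η·τ₀·(δ_S − Δ_S)`. -/
theorem stmt18 {d : ℕ} {ι : Type*} (S : Finset ι)
    (f : ι → EuclideanSpace ℝ (Fin d) → ℝ) (β η : ℝ) (hβ : 0 < β) (hη : 0 < η)
    (hf : ∀ m ∈ S, Differentiable ℝ (f m))
    (hsmooth : ∀ m ∈ S, ∀ x y, ‖gradient (f m) x - gradient (f m) y‖ ≤ β * ‖x - y‖)
    (α : ι → ℝ) (hα : ∀ m ∈ S, 0 < α m) (hαsum : ∑ m ∈ S, α m = 1)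
    (F : EuclideanSpace ℝ (Fin d) → ℝ) (hFdiff : Differentiable ℝ F)
    (δm : ι → ℝ) (hδm : ∀ m ∈ S, ∀ x, ‖gradient (f m) x - gradient F x‖ ≤ δm m)
    (δS : ℝ) (hδS : δS = ∑ m ∈ S, α m * δm m)
    (G : EuclideanSpace ℝ (Fin d) → ℝ) (hG : G = fun x => ∑ m ∈ S, α m * f m x)
    (ΔS : ℝ) (hΔS : ∀ x, ‖gradient G x - gradient F x‖ ≤ ΔS) (hΔδ : ΔS ≤ δS)
    (w : ℕ → ι → EuclideanSpace ℝ (Fin d)) (v : ℕ → EuclideanSpace ℝ (Fin d))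
    (h0 : ∀ m ∈ S, w 0 m = v 0)
    (hw : ∀ τ : ℕ, ∀ m ∈ S, w (τ + 1) m = w τ m - η • gradient (f m) (w τ m))
    (hv : ∀ τ : ℕ, v (τ + 1) = v τ - η • gradient F (v τ)) :
    ∀ τ₀ : ℕ, ‖(∑ m ∈ S, α m • w τ₀ m) - v τ₀‖ ≤
      δS / β * ((1 + η * β) ^ τ₀ - 1) - η * (τ₀ : ℝ) * (δS - ΔS) :=
  stmt18_general S f β η hβ hη hf hsmooth α hα hαsum F δm hδm δS hδS G hG ΔS hΔS w v h0 hw hv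
end
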